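/- arXiv:1606.03709 — 4 statements merged into one kernel-verified Lean document; each statement's English description precedes it below -/
import Mathlib

section
/- For each m₀ ∈ P(𝕋), the map m ↦ sup_{t ∈ 𝕋} |m[0,t] − m₀[0,t]| from P(𝕋) to ℝ is continuous at m₀ with respect to the topology σ(P(𝕋),B(𝕋)). -/
/-!
Setwise convergence `m → m₀` makes `m B - m₀ B` small for finitely many measurable `B` at once.
If `τ₀, …, τₙ` are the `k/n`-quantiles of `m₀`, every set `{s ≤ t}` lies between some
`{s ≤ τₖ}` and `{s < τₖ₊₁}` (or the whole space), whose `m₀`-measures differ by at most `1/n`;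
so `|m{s ≤ t} - m₀{s ≤ t}|` is bounded uniformly in `t`, as in the bracketing proof of the
Glivenko–Cantelli theorem.
-/

open MeasureTheory Topology

/-- The topology `σ(P(𝕋), B(𝕋))` on probability measures on `𝕋`: the coarsest topology making
`m ↦ ∫ φ dm` continuous for every bounded Borel measurable `φ : 𝕋 → ℝ`. -/
noncomputable def sigmaBTopology (𝕋 : Type*) [MeasurableSpace 𝕋] :
    TopologicalSpace (ProbabilityMeasure 𝕋) :=
  ⨅ φ : {f : 𝕋 → ℝ // Measurable f ∧ ∃ C, ∀ t, |f t| ≤ C},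
    TopologicalSpace.induced (fun m : ProbabilityMeasure 𝕋 => ∫ t, φ.1 t ∂(m : Measure 𝕋))
      inferInstance

open Filter Set
open scoped ENNReal

section CofinalSequence

variable {β : Type*} [ConditionallyCompleteLinearOrder β] [TopologicalSpace β] [OrderTopology β]
  [FirstCountableTopology β] {P : Set β}

theorem exists_monotone_seq_cofinal (hne : P.Nonempty) (hbdd : BddAbove P) :
    ∃ u : ℕ → β, Monotone u ∧ (∀ n, u n ∈ P) ∧ ∀ s ∈ P, ∃ n, s ≤ u n := by
  by_cases hmax : sSup P ∈ P
  · exact ⟨fun _ => sSup P, monotone_const, fun _ => hmax, fun s hs => ⟨0, le_csSup hbdd hs⟩⟩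
  obtain ⟨u, hmono, htends, huP⟩ := exists_seq_tendsto_sSup hne hbdd
  refine ⟨u, hmono, huP, fun s hs => ?_⟩
  have hlt : s < sSup P := (le_csSup hbdd hs).lt_of_ne fun h => hmax (h ▸ hs)
  exact (htends.eventually (lt_mem_nhds hlt)).exists.imp fun _ => le_of_lt

theorem exists_antitone_seq_coinitial (hne : P.Nonempty) (hbdd : BddBelow P) :
    ∃ u : ℕ → β, Antitone u ∧ (∀ n, u n ∈ P) ∧ ∀ s ∈ P, ∃ n, u n ≤ s :=
  exists_monotone_seq_cofinal (β := βᵒᵈ) hne hbdd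

end CofinalSequence

section Quantile

variable {α β : Type*} [MeasurableSpace α] [TopologicalSpace β] {X : α → β} (μ : Measure α)

theorem le_measure_preimage_Iic_csInf [ConditionallyCompleteLinearOrder β] [OrderTopology β]
    [FirstCountableTopology β] [MeasurableSpace β] [OpensMeasurableSpace β] [IsFiniteMeasure μ]
    (hX : Measurable X) {S : Set β}
    (hne : S.Nonempty) (hbdd : BddBelow S) {c : ℝ≥0∞} (h : ∀ t ∈ S, c ≤ μ (X ⁻¹' Iic t)) :
    c ≤ μ (X ⁻¹' Iic (sInf S)) := by
  obtain ⟨u, hanti, huS, hcoinitial⟩ := exists_antitone_seq_coinitial hne hbdd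
  have hanti' : Antitone fun n => X ⁻¹' Iic (u n) :=
    fun _ _ hij => preimage_mono (Iic_subset_Iic.2 (hanti hij))
  have hinter : ⋂ n, X ⁻¹' Iic (u n) ⊆ X ⁻¹' Iic (sInf S) := by
    intro a ha
    simp only [mem_iInter, mem_preimage, mem_Iic] at ha ⊢
    exact le_csInf hne fun t ht => (hcoinitial t ht).elim fun n hn => (ha n).trans hn
  calc c ≤ ⨅ n, μ (X ⁻¹' Iic (u n)) := le_iInf fun n => h _ (huS n)
    _ = μ (⋂ n, X ⁻¹' Iic (u n)) :=
      (hanti'.measure_iInter (fun _ => (hX measurableSet_Iic).nullMeasurableSet)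
        ⟨0, measure_ne_top _ _⟩).symm
    _ ≤ μ (X ⁻¹' Iic (sInf S)) := measure_mono hinter

theorem measure_preimage_Iio_le [ConditionallyCompleteLinearOrder β] [OrderTopology β]
    [FirstCountableTopology β] {τ : β} {c : ℝ≥0∞} (h : ∀ t < τ, μ (X ⁻¹' Iic t) ≤ c) :
    μ (X ⁻¹' Iio τ) ≤ c := by
  rcases (Iio τ).eq_empty_or_nonempty with hempty | hne
  · simp [hempty]
  obtain ⟨u, hmono, huP, hcofinal⟩ := exists_monotone_seq_cofinal hne bddAbove_Iio
  have hmono' : Monotone fun n => X ⁻¹' Iic (u n) :=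
    fun _ _ hij => preimage_mono (Iic_subset_Iic.2 (hmono hij))
  calc μ (X ⁻¹' Iio τ) ≤ μ (⋃ n, X ⁻¹' Iic (u n)) :=
        measure_mono fun a ha => mem_iUnion.2 (hcofinal _ ha)
    _ = ⨆ n, μ (X ⁻¹' Iic (u n)) := hmono'.measure_iUnion
    _ ≤ c := iSup_le fun n => h _ (huP n)

theorem exists_quantile [CompleteLinearOrder β] [OrderTopology β] [FirstCountableTopology β]
    [MeasurableSpace β] [OpensMeasurableSpace β] [IsFiniteMeasure μ] (hX : Measurable X)
    {c : ℝ≥0∞} (hc : c ≤ μ univ) :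
    ∃ τ : β, c ≤ μ (X ⁻¹' Iic τ) ∧ μ (X ⁻¹' Iio τ) ≤ c ∧
      ∀ t, c ≤ μ (X ⁻¹' Iic t) → τ ≤ t := by
  set S := {t | c ≤ μ (X ⁻¹' Iic t)}
  have hne : S.Nonempty := ⟨⊤, by simpa [S] using hc⟩
  refine ⟨sInf S, le_measure_preimage_Iic_csInf μ hX hne (OrderBot.bddBelow S) fun _ ht => ht,
    measure_preimage_Iio_le μ fun t ht => ?_, fun _ ht => sInf_le ht⟩
  exact (lt_of_not_ge fun hct : c ≤ μ (X ⁻¹' Iic t) => (sInf_le (s := S) hct).not_gt ht).le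

end Quantile

section Bracketing

variable {α : Type*} [MeasurableSpace α]

def HasFiniteBrackets {ι : Type*} (μ : Measure α) (A : ι → Set α) : Prop :=
  ∀ ε : ℝ≥0∞, 0 < ε → ∃ 𝒮 : Set (Set α), 𝒮.Finite ∧ (∀ B ∈ 𝒮, MeasurableSet B) ∧
    ∀ i, ∃ B ∈ 𝒮, ∃ C ∈ 𝒮, B ⊆ A i ∧ A i ⊆ C ∧ μ C ≤ μ B + ε

theorem HasFiniteBrackets.comp {ι κ : Type*} {μ : Measure α} {A : ι → Set α}
    (h : HasFiniteBrackets μ A) (f : κ → ι) : HasFiniteBrackets μ (A ∘ f) :=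
  fun ε hε => (h ε hε).imp fun _ ⟨hfin, hmeas, hbrackets⟩ => ⟨hfin, hmeas, fun k => hbrackets (f k)⟩

theorem hasFiniteBrackets_preimage_Iic {β : Type*} [CompleteLinearOrder β] [TopologicalSpace β]
    [OrderTopology β] [FirstCountableTopology β] [MeasurableSpace β] [OpensMeasurableSpace β]
    (μ : Measure α) [IsProbabilityMeasure μ] {X : α → β} (hX : Measurable X) :
    HasFiniteBrackets μ fun t => X ⁻¹' Iic t := by
  intro ε hε
  obtain ⟨n, hn⟩ := ENNReal.exists_inv_nat_lt hε.ne'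
  have hn0 : (n : ℝ≥0∞) ≠ 0 := by
    rintro h
    simp [h] at hn
  have hlevel_top : (n : ℝ≥0∞) * (n : ℝ≥0∞)⁻¹ = μ univ := by
    rw [measure_univ, ENNReal.mul_inv_cancel hn0 (ENNReal.natCast_ne_top n)]
  have hlevel : ∀ k ≤ n, (k : ℝ≥0∞) * (n : ℝ≥0∞)⁻¹ ≤ μ univ := fun k hk =>
    hlevel_top ▸ by gcongr
  choose! τ hτ using fun k (hk : k ≤ n) => exists_quantile μ hX (hlevel k hk)
  let 𝒮 : Set (Set α) :=
    insert univ ((fun k => X ⁻¹' Iic (τ k)) '' Iic n ∪ (fun k => X ⁻¹' Iio (τ k)) '' Iic n)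
  refine ⟨𝒮, (((finite_Iic n).image _).union ((finite_Iic n).image _)).insert univ, ?_,
    fun t => ?_⟩
  · rintro B (rfl | ⟨k, -, rfl⟩ | ⟨k, -, rfl⟩)
    exacts [MeasurableSet.univ, hX measurableSet_Iic, hX measurableSet_Iio]
  set k := Nat.findGreatest (fun k => τ k ≤ t) n
  have hkn : k ≤ n := Nat.findGreatest_le n
  have hτk : τ k ≤ t := Nat.findGreatest_spec (P := fun k => τ k ≤ t) (Nat.zero_le n)
    ((hτ 0 (Nat.zero_le n)).2.2 t (by simp))
  have hlower : (k : ℝ≥0∞) * (n : ℝ≥0∞)⁻¹ ≤ μ (X ⁻¹' Iic (τ k)) := (hτ k hkn).1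
  have hBmem : X ⁻¹' Iic (τ k) ∈ 𝒮 := mem_insert_of_mem _ (Or.inl ⟨k, hkn, rfl⟩)
  rcases hkn.lt_or_eq with hlt | hk_eq
  · have ht : t < τ (k + 1) :=
      lt_of_not_ge (Nat.findGreatest_is_greatest (Nat.lt_succ_self k) hlt)
    refine ⟨_, hBmem, _, mem_insert_of_mem _ (Or.inr ⟨k + 1, hlt, rfl⟩),
      preimage_mono (Iic_subset_Iic.2 hτk), preimage_mono (Iic_subset_Iio.2 ht), ?_⟩
    calc μ (X ⁻¹' Iio (τ (k + 1))) ≤ ((k + 1 : ℕ) : ℝ≥0∞) * (n : ℝ≥0∞)⁻¹ :=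
          (hτ (k + 1) hlt).2.1
      _ = k * (n : ℝ≥0∞)⁻¹ + (n : ℝ≥0∞)⁻¹ := by push_cast; ring
      _ ≤ μ (X ⁻¹' Iic (τ k)) + ε := add_le_add hlower hn.le
  · refine ⟨_, hBmem, univ, mem_insert _ _, preimage_mono (Iic_subset_Iic.2 hτk),
      subset_univ _, ?_⟩
    calc μ univ = k * (n : ℝ≥0∞)⁻¹ := by rw [hk_eq, hlevel_top]
      _ ≤ μ (X ⁻¹' Iic (τ k)) + ε := le_add_right hlower

theorem continuous_measureReal_sigmaBTopology {A : Set α} (hA : MeasurableSet A) :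
    @Continuous _ ℝ (sigmaBTopology α) _
      fun m : ProbabilityMeasure α => (m : Measure α).real A := by
  let φ : {f : α → ℝ // Measurable f ∧ ∃ C, ∀ t, |f t| ≤ C} :=
    ⟨A.indicator 1, measurable_one.indicator hA, 1, fun t => by by_cases ht : t ∈ A <;> simp [ht]⟩
  have hφ : @Continuous _ ℝ (sigmaBTopology α) _
      fun m : ProbabilityMeasure α => ∫ t, φ.1 t ∂(m : Measure α) :=
    continuous_iInf_dom continuous_induced_dom
  simpa only [φ, integral_indicator_one hA] using hφ

theorem abs_measureReal_sub_le_of_subset_of_subset {μ ν : Measure α} [IsFiniteMeasure μ]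
    [IsFiniteMeasure ν] {A B C : Set α} (hBA : B ⊆ A) (hAC : A ⊆ C) {δ : ℝ}
    (hB : |μ.real B - ν.real B| ≤ δ) (hC : |μ.real C - ν.real C| ≤ δ) :
    |μ.real A - ν.real A| ≤ δ + (ν.real C - ν.real B) := by
  rw [abs_sub_le_iff] at hB hC ⊢
  constructor <;> linarith [measureReal_mono (μ := μ) hBA, measureReal_mono (μ := μ) hAC,
    measureReal_mono (μ := ν) hBA, measureReal_mono (μ := ν) hAC]

theorem continuousAt_iSup_abs_measureReal_sub {ι : Type*} {A : ι → Set α}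
    (m₀ : ProbabilityMeasure α) (hA : HasFiniteBrackets (m₀ : Measure α) A) :
    @ContinuousAt _ ℝ (sigmaBTopology α) _ (fun m : ProbabilityMeasure α =>
      ⨆ i, |(m : Measure α).real (A i) - (m₀ : Measure α).real (A i)|) m₀ := by
  refine Metric.tendsto_nhds.2 fun ε hε => ?_
  obtain ⟨𝒮, hfin, hmeas, hbrackets⟩ := hA (ENNReal.ofReal (ε / 3)) (by simpa using hε)
  have hclose : ∀ᶠ m : ProbabilityMeasure α in @nhds _ (sigmaBTopology α) m₀,
      ∀ B ∈ 𝒮, |(m : Measure α).real B - (m₀ : Measure α).real B| < ε / 3 :=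
    (eventually_all_finite hfin).2 fun B hB => by
      simpa only [Real.dist_eq] using Metric.tendsto_nhds.1
        (@Continuous.tendsto _ _ (sigmaBTopology α) _ _
          (continuous_measureReal_sigmaBTopology (hmeas B hB)) m₀) (ε / 3) (by positivity)
  filter_upwards [hclose] with m hm
  have hbound : ∀ i, |(m : Measure α).real (A i) - (m₀ : Measure α).real (A i)| ≤ 2 * ε / 3 := by
    intro i
    obtain ⟨B, hB, C, hC, hBA, hAC, hCB⟩ := hbrackets i
    have hgap : (m₀ : Measure α).real C ≤ (m₀ : Measure α).real B + ε / 3 := by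
      have := ENNReal.toReal_mono (by finiteness) hCB
      rwa [ENNReal.toReal_add (measure_ne_top _ _) ENNReal.ofReal_ne_top,
        ENNReal.toReal_ofReal (by positivity)] at this
    linarith [abs_measureReal_sub_le_of_subset_of_subset hBA hAC (hm B hB).le (hm C hC).le]
  simp only [sub_self, abs_zero, Real.iSup_const_zero, Real.dist_eq, sub_zero]
  rw [abs_of_nonneg (Real.iSup_nonneg fun i => abs_nonneg _)]
  exact (Real.iSup_le hbound (by positivity)).trans_lt (by linarith)

end Bracketing

theorem stmt_0_general (𝕋s : Set ENNReal) (m₀ : ProbabilityMeasure 𝕋s) :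
    @ContinuousAt (ProbabilityMeasure 𝕋s) ℝ (sigmaBTopology 𝕋s) _
      (fun m : ProbabilityMeasure 𝕋s =>
        ⨆ t : 𝕋s, |((m : Measure 𝕋s) {s | s ≤ t}).toReal
          - ((m₀ : Measure 𝕋s) {s | s ≤ t}).toReal|)
      m₀ :=
  continuousAt_iSup_abs_measureReal_sub m₀
    ((hasFiniteBrackets_preimage_Iic _ measurable_subtype_coe).comp Subtype.val)

/-- **Lemma (Glivenko–Cantelli-type).** For any `m₀ ∈ 𝒫(𝕋)`, the map
`m ↦ sup_{t ∈ 𝕋} |m[0,t] − m₀[0,t]|` is `σ(𝒫(𝕋), B(𝕋))`-continuous at `m₀`.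
Here `𝕋 ⊆ [0,∞]` is a compact time set, either discrete or an interval `[0,T]`. -/
theorem stmt_0 (𝕋s : Set ENNReal) (hcomp : IsCompact 𝕋s)
    (hform : DiscreteTopology 𝕋s ∨ ∃ a, 𝕋s = Set.Icc 0 a)
    (m₀ : ProbabilityMeasure 𝕋s) :
    @ContinuousAt (ProbabilityMeasure 𝕋s) ℝ (sigmaBTopology 𝕋s) _
      (fun m : ProbabilityMeasure 𝕋s =>
        ⨆ t : 𝕋s, |((m : Measure 𝕋s) {s | s ≤ t}).toReal
          - ((m₀ : Measure 𝕋s) {s | s ≤ t}).toReal|)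
      m₀ :=
  stmt_0_general 𝕋s m₀
end

section
/- Let G : [0,1] → ℝ be continuous and differentiable on (0,1). Suppose that for every pair m, m̃ of Borel probability measures on [0,T] satisfying m[0,t] ≥ m̃[0,t] for all t ∈ [0,T], the function t ↦ G(m̃[0,t]) − G(m[0,t]) is nondecreasing on [0,T]. Then G is constant. -/
/-! For `0 ≤ a ≤ b ≤ 1` and points `x₀ < x₁ < x₂` with `x₀` minimal, three-atom probability
measures realise the ordered distribution functions with levels `(a, a, 1) ≤ (a, b, 1) ≤ (b, b, 1)`
on `[x₀, x₁), [x₁, x₂), [x₂, ∞)`. Monotonicity between `x₀` and `x₁` applied to the first pair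
gives `G b ≤ G a`, and applied to the second pair gives `G a ≤ G b`. -/

open MeasureTheory Set

section StepMeasure

variable {α : Type*} [MeasurableSpace α]

noncomputable def stepMeasure (x₀ x₁ x₂ : α) (a b : ℝ) : Measure α :=
  ENNReal.ofReal a • Measure.dirac x₀ + ENNReal.ofReal (b - a) • Measure.dirac x₁ +
    ENNReal.ofReal (1 - b) • Measure.dirac x₂

variable {x₀ x₁ x₂ : α} {a b a' b' : ℝ}

theorem isProbabilityMeasure_stepMeasure (ha : 0 ≤ a) (hab : a ≤ b) (hb : b ≤ 1) :
    IsProbabilityMeasure (stepMeasure x₀ x₁ x₂ a b) := by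
  constructor
  simp only [stepMeasure, Measure.add_apply, Measure.smul_apply, measure_univ, smul_eq_mul,
    mul_one]
  rw [← ENNReal.ofReal_add ha (sub_nonneg.2 hab), ← ENNReal.ofReal_add (by linarith) (by linarith)]
  simp

variable [Preorder α] [MeasurableSingletonClass α]

open Classical in
theorem stepMeasure_Iic {t : α} (h₀ : x₀ ≤ t) (h₁₂ : x₁ ≤ x₂) (ha : 0 ≤ a) (hab : a ≤ b)
    (hb : b ≤ 1) :
    stepMeasure x₀ x₁ x₂ a b (Iic t) =
      ENNReal.ofReal (if x₂ ≤ t then 1 else if x₁ ≤ t then b else a) := by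
  have hab' : ENNReal.ofReal a + ENNReal.ofReal (b - a) = ENNReal.ofReal b := by
    rw [← ENNReal.ofReal_add ha (sub_nonneg.2 hab), add_sub_cancel]
  have hb' : ENNReal.ofReal b + ENNReal.ofReal (1 - b) = 1 := by
    rw [← ENNReal.ofReal_add (ha.trans hab) (sub_nonneg.2 hb), add_sub_cancel, ENNReal.ofReal_one]
  simp only [stepMeasure, Measure.add_apply, Measure.smul_apply, Measure.dirac_apply,
    indicator, mem_Iic, Pi.one_apply, h₀, smul_eq_mul, ↓reduceIte]
  split_ifs with h₁ h₂ h₂ <;>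
    simp only [mul_one, mul_zero, add_zero, hab', hb', ENNReal.ofReal_one]
  exact absurd (h₁₂.trans h₂) h₁

theorem stepMeasure_Iic_mono {t : α} (h₀ : x₀ ≤ t) (h₁₂ : x₁ ≤ x₂) (ha : 0 ≤ a)
    (hab : a ≤ b) (hab' : a' ≤ b') (hb' : b' ≤ 1) (haa' : a ≤ a') (hbb' : b ≤ b') :
    stepMeasure x₀ x₁ x₂ a b (Iic t) ≤ stepMeasure x₀ x₁ x₂ a' b' (Iic t) := by
  rw [stepMeasure_Iic h₀ h₁₂ ha hab (hbb'.trans hb'),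
    stepMeasure_Iic h₀ h₁₂ (ha.trans haa') hab' hb']
  gcongr
  split_ifs <;> linarith

theorem toReal_stepMeasure_Iic_left (hx : x₀ < x₁) (h₁₂ : x₁ ≤ x₂) (ha : 0 ≤ a) (hab : a ≤ b)
    (hb : b ≤ 1) : (stepMeasure x₀ x₁ x₂ a b (Iic x₀)).toReal = a := by
  rw [stepMeasure_Iic le_rfl h₁₂ ha hab hb, if_neg (hx.trans_le h₁₂).not_ge, if_neg hx.not_ge,
    ENNReal.toReal_ofReal ha]

theorem toReal_stepMeasure_Iic_mid (hx₀ : x₀ ≤ x₁) (hx : x₁ < x₂) (ha : 0 ≤ a) (hab : a ≤ b)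
    (hb : b ≤ 1) : (stepMeasure x₀ x₁ x₂ a b (Iic x₁)).toReal = b := by
  rw [stepMeasure_Iic hx₀ hx.le ha hab hb, if_neg hx.not_ge, if_pos le_rfl,
    ENNReal.toReal_ofReal (ha.trans hab)]

end StepMeasure

section CDFComparison

variable (α : Type*) [MeasurableSpace α] [Preorder α]

/-- Condition (B.2) for the objective `G(m[0,t])`. -/
def CDFComparisonMonotone (G : ℝ → ℝ) : Prop :=
  ∀ m m' : Measure α, IsProbabilityMeasure m → IsProbabilityMeasure m' →
    (∀ t, m' (Iic t) ≤ m (Iic t)) →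
    Monotone fun t => G (m' (Iic t)).toReal - G (m (Iic t)).toReal

variable {α} [MeasurableSingletonClass α] {G : ℝ → ℝ} {x₀ x₁ x₂ : α} {a b a' b' : ℝ}

theorem CDFComparisonMonotone.sub_le_sub (hG : CDFComparisonMonotone α G) (h₀ : ∀ t, x₀ ≤ t)
    (h₀₁ : x₀ < x₁) (h₁₂ : x₁ < x₂) (ha : 0 ≤ a) (hab : a ≤ b) (hab' : a' ≤ b') (hb' : b' ≤ 1)
    (haa' : a ≤ a') (hbb' : b ≤ b') : G a - G a' ≤ G b - G b' := by
  have hmono := hG (stepMeasure x₀ x₁ x₂ a' b') (stepMeasure x₀ x₁ x₂ a b)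
    (isProbabilityMeasure_stepMeasure (ha.trans haa') hab' hb')
    (isProbabilityMeasure_stepMeasure ha hab (hbb'.trans hb'))
    (fun t => stepMeasure_Iic_mono (h₀ t) h₁₂.le ha hab hab' hb' haa' hbb') h₀₁.le
  dsimp only at hmono
  rwa [toReal_stepMeasure_Iic_left h₀₁ h₁₂.le ha hab (hbb'.trans hb'),
    toReal_stepMeasure_Iic_left h₀₁ h₁₂.le (ha.trans haa') hab' hb',
    toReal_stepMeasure_Iic_mid h₀₁.le h₁₂ ha hab (hbb'.trans hb'),
    toReal_stepMeasure_Iic_mid h₀₁.le h₁₂ (ha.trans haa') hab' hb'] at hmono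

theorem CDFComparisonMonotone.eq (hG : CDFComparisonMonotone α G) (h₀ : ∀ t, x₀ ≤ t)
    (h₀₁ : x₀ < x₁) (h₁₂ : x₁ < x₂) (ha : 0 ≤ a) (hab : a ≤ b) (hb : b ≤ 1) : G a = G b := by
  have hle := hG.sub_le_sub h₀ h₀₁ h₁₂ ha hab le_rfl hb hab le_rfl
  have hge := hG.sub_le_sub h₀ h₀₁ h₁₂ ha le_rfl hab hb le_rfl hab
  linarith

end CDFComparison

theorem stmt_4_general (T : ℝ) (hT : 0 < T) (G : ℝ → ℝ)
    (h : ∀ (m m' : Measure (Icc (0:ℝ) T)), IsProbabilityMeasure m → IsProbabilityMeasure m' →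
      (∀ t : Icc (0:ℝ) T, m' {s | s ≤ t} ≤ m {s | s ≤ t}) →
      Monotone fun t : Icc (0:ℝ) T =>
        G ((m' {s | s ≤ t}).toReal) - G ((m {s | s ≤ t}).toReal)) :
    ∀ u ∈ Icc (0:ℝ) 1, ∀ v ∈ Icc (0:ℝ) 1, G u = G v := by
  have hG : CDFComparisonMonotone (Icc (0:ℝ) T) G := h
  intro u hu v hv
  wlog huv : u ≤ v generalizing u v
  · exact (this v hv u hu (le_of_not_ge huv)).symm
  have hmid : T / 2 ∈ Icc 0 T := ⟨by positivity, by linarith⟩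
  exact hG.eq (x₀ := ⟨0, le_rfl, hT.le⟩) (x₁ := ⟨T / 2, hmid⟩) (x₂ := ⟨T, hT.le, le_rfl⟩)
    (fun t => t.2.1) (half_pos hT) (half_lt_self hT) hu.1 huv hv.2

/-- **Proposition (no nontrivial interaction through `m[0,t]` under (B.2)).**
Let `G : [0,1] → ℝ` be continuous and differentiable on `(0,1)`. If for all Borel probability
measures `m, m̃` on `[0,T]` with `m[0,t] ≥ m̃[0,t]` for all `t`, the map
`t ↦ G(m̃[0,t]) − G(m[0,t])` is nondecreasing on `[0,T]`, then `G` is constant. -/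
theorem stmt_4 (T : ℝ) (hT : 0 < T) (G : ℝ → ℝ)
    (hGcont : ContinuousOn G (Icc 0 1))
    (hGdiff : ∀ u ∈ Ioo (0:ℝ) 1, DifferentiableAt ℝ G u)
    (h : ∀ (m m' : Measure (Icc (0:ℝ) T)), IsProbabilityMeasure m → IsProbabilityMeasure m' →
      (∀ t : Icc (0:ℝ) T, m' {s | s ≤ t} ≤ m {s | s ≤ t}) →
      Monotone fun t : Icc (0:ℝ) T =>
        G ((m' {s | s ≤ t}).toReal) - G ((m {s | s ≤ t}).toReal)) :
    ∀ u ∈ Icc (0:ℝ) 1, ∀ v ∈ Icc (0:ℝ) 1, G u = G v :=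
  stmt_4_general T hT G h
end

section
/- Let (Ω, ℱ, P) be a probability space with a right-continuous filtration 𝔽 = (ℱ_t)_{t ∈ 𝕋} indexed by a compact time set 𝕋 ⊆ [0,∞] that is either discrete or an interval [0,T]. Then the set 𝒮 of (equivalence classes of almost surely equal) 𝕋-valued 𝔽-stopping times, partially ordered by almost sure inequality, is a complete lattice: for every subset Φ ⊆ 𝒮, the essential supremum of Φ and the essential infimum of Φ are each almost surely equal to an 𝔽-stopping time, and these provide a least upper bound and greatest lower bound of Φ in 𝒮. -/
/-!
A family of random variables has an essential supremum realised by a countable subfamily: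
maximise `∫ ψ (⨆ f ∈ C, f)` over countable subfamilies `C`, for a bounded strictly increasing
`ψ`; adding any further member to a maximiser cannot increase the integral, so that member is
a.s. below the supremum (infima reduce to suprema through `x ↦ x⁻¹`). Since `𝕋` is closed,
countable suprema and infima of `𝕋`-valued stopping times are again `𝕋`-valued. For suprema,
`{sup ≤ t} = ⋂ {τₙ ≤ t}`. For infima, `{inf ≤ t}` is a countable intersection of the sets
`{inf < d}` over times `d ∈ 𝕋` decreasing to `t`, so it lies in every `ℱ_s` with `s > t`, and
hence in `ℱ_t` by right-continuity.
-/

open MeasureTheory Set Filter Topology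
open scoped ENNReal

theorem exists_countable_isCofinalFor {α : Type*} [CompleteLinearOrder α] [TopologicalSpace α]
    [OrderTopology α] [FirstCountableTopology α] (A : Set α) :
    ∃ D ⊆ A, D.Countable ∧ IsCofinalFor A D := by
  by_cases hmax : sSup A ∈ A
  · exact ⟨{sSup A}, singleton_subset_iff.2 hmax, countable_singleton _,
      fun x hx => ⟨_, rfl, le_sSup hx⟩⟩
  rcases A.eq_empty_or_nonempty with rfl | hne
  · exact ⟨∅, empty_subset _, countable_empty, fun x hx => hx.elim⟩
  obtain ⟨u, -, hu, huA⟩ := exists_seq_tendsto_sSup hne (OrderTop.bddAbove A)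
  refine ⟨range u, range_subset_iff.2 huA, countable_range u, fun x hx => ?_⟩
  have hlt : x < sSup A := (le_sSup hx).lt_of_ne (ne_of_mem_of_not_mem hx hmax)
  obtain ⟨n, hn⟩ := (hu.eventually (lt_mem_nhds hlt)).exists
  exact ⟨u n, mem_range_self n, hn.le⟩

theorem exists_countable_isCoinitialFor {α : Type*} [CompleteLinearOrder α] [TopologicalSpace α]
    [OrderTopology α] [FirstCountableTopology α] (A : Set α) :
    ∃ D ⊆ A, D.Countable ∧ IsCoinitialFor A D :=
  exists_countable_isCofinalFor (α := αᵒᵈ) A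

theorem IsClosed.biSup_mem {α ι : Type*} [CompleteLinearOrder α] [TopologicalSpace α]
    [OrderTopology α] {T : Set α} (hT : IsClosed T) {S : Set ι} (hS : S.Nonempty) {g : ι → α}
    (hg : ∀ i ∈ S, g i ∈ T) : ⨆ i ∈ S, g i ∈ T := by
  rw [← sSup_image]
  exact hT.closure_subset_iff.2 (image_subset_iff.2 hg) (sSup_mem_closure (hS.image g))

theorem IsClosed.biInf_mem {α ι : Type*} [CompleteLinearOrder α] [TopologicalSpace α]
    [OrderTopology α] {T : Set α} (hT : IsClosed T) {S : Set ι} (hS : S.Nonempty) {g : ι → α}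
    (hg : ∀ i ∈ S, g i ∈ T) : ⨅ i ∈ S, g i ∈ T :=
  IsClosed.biSup_mem (α := αᵒᵈ) hT hS hg

theorem exists_countable_le_iff_forall_lt {T : Set ℝ≥0∞} {t s : ℝ≥0∞} (hs : s ∈ T) (hts : t < s) :
    ∃ D ⊆ T ∩ Ioc t s, D.Countable ∧ ∀ x ∈ T, x ≤ t ↔ ∀ d ∈ D, x < d := by
  obtain ⟨D, hDA, hD, hcoinit⟩ := exists_countable_isCoinitialFor (T ∩ Ioc t s)
  refine ⟨D, hDA, hD, fun x hx => ⟨fun hxt d hd => hxt.trans_lt (hDA hd).2.1, fun h => ?_⟩⟩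
  by_contra! htx
  have hmin : min x s ∈ T ∩ Ioc t s :=
    ⟨min_rec' (· ∈ T) hx hs, lt_min htx hts, min_le_right x s⟩
  obtain ⟨d, hd, hdx⟩ := hcoinit hmin
  exact (h d hd).not_ge (hdx.trans (min_le_left x s))

section EssentialSupremum

variable {Ω ι : Type*} {mΩ : MeasurableSpace Ω} {μ : Measure Ω}

theorem ae_le_of_le_of_lintegral_comp_le [IsFiniteMeasure μ] {ψ : ℝ≥0∞ → ℝ≥0∞}
    (hψ : StrictMono ψ) (hψm : Measurable ψ) (hψ1 : ∀ x, ψ x ≤ 1) {g h : Ω → ℝ≥0∞}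
    (hgh : g ≤ h) (hh : Measurable h) (hint : ∫⁻ ω, ψ (h ω) ∂μ ≤ ∫⁻ ω, ψ (g ω) ∂μ) :
    h ≤ᵐ[μ] g := by
  have hfin : ∫⁻ ω, ψ (g ω) ∂μ ≠ ∞ :=
    ne_top_of_le_ne_top (by simp [measure_ne_top]) (lintegral_mono fun ω => hψ1 (g ω))
  have heq := ae_eq_of_ae_le_of_lintegral_le (Eventually.of_forall fun ω => hψ.monotone (hgh ω))
    hfin (hψm.comp hh).aemeasurable hint
  filter_upwards [heq] with ω hω
  exact (hψ.injective hω).ge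

theorem strictMono_inv_add_one_inv : StrictMono fun x : ℝ≥0∞ => (x⁻¹ + 1)⁻¹ := fun _ _ h =>
  ENNReal.inv_lt_inv.2 (ENNReal.add_lt_add_right ENNReal.one_ne_top (ENNReal.inv_lt_inv.2 h))

theorem exists_countable_subset_ae_le_biSup [IsFiniteMeasure μ] (Φ : Set ι) (f : ι → Ω → ℝ≥0∞)
    (hf : ∀ i ∈ Φ, Measurable (f i)) :
    ∃ C ⊆ Φ, C.Countable ∧ ∀ i ∈ Φ, ∀ᵐ ω ∂μ, f i ω ≤ ⨆ j ∈ C, f j ω := by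
  set ψ : ℝ≥0∞ → ℝ≥0∞ := fun x => (x⁻¹ + 1)⁻¹
  have hψ : StrictMono ψ := strictMono_inv_add_one_inv
  set J : Set ι → ℝ≥0∞ := fun C => ∫⁻ ω, ψ (⨆ j ∈ C, f j ω) ∂μ
  have hJ : Monotone J := fun C C' h => lintegral_mono fun ω => hψ.monotone (biSup_mono h)
  set 𝒞 : Set (Set ι) := {C | C ⊆ Φ ∧ C.Countable}
  have h𝒞 : (J '' 𝒞).Nonempty := ⟨J ∅, ∅, ⟨empty_subset Φ, countable_empty⟩, rfl⟩
  obtain ⟨a, -, ha, haJ⟩ := exists_seq_tendsto_sSup h𝒞 (OrderTop.bddAbove _)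
  choose C hC hCa using haJ
  have hC₀ : ⋃ n, C n ∈ 𝒞 := ⟨iUnion_subset fun n => (hC n).1, countable_iUnion fun n => (hC n).2⟩
  have hJ_max : ∀ C' ∈ 𝒞, J C' ≤ J (⋃ n, C n) := fun C' hC' =>
    (le_sSup (mem_image_of_mem J hC')).trans
      (le_of_tendsto' ha fun n => hCa n ▸ hJ (subset_iUnion C n))
  refine ⟨⋃ n, C n, hC₀.1, hC₀.2, fun i hi => ?_⟩
  have hins : insert i (⋃ n, C n) ∈ 𝒞 := ⟨insert_subset hi hC₀.1, hC₀.2.insert i⟩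
  filter_upwards [ae_le_of_le_of_lintegral_comp_le hψ (by fun_prop)
    (fun x => ENNReal.inv_le_one.2 le_add_self) (fun ω => biSup_mono (subset_insert _ _))
    (Measurable.biSup _ hins.2 fun j hj => hf j (hins.1 hj)) (hJ_max _ hins)] with ω hω
  exact (le_biSup (f · ω) (mem_insert i _)).trans hω

theorem exists_countable_subset_ae_biInf_le [IsFiniteMeasure μ] (Φ : Set ι) (f : ι → Ω → ℝ≥0∞)
    (hf : ∀ i ∈ Φ, Measurable (f i)) :
    ∃ C ⊆ Φ, C.Countable ∧ ∀ i ∈ Φ, ∀ᵐ ω ∂μ, ⨅ j ∈ C, f j ω ≤ f i ω := by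
  obtain ⟨C, hCΦ, hC, hle⟩ := exists_countable_subset_ae_le_biSup (μ := μ) Φ
    (fun i ω => (f i ω)⁻¹) fun i hi => (hf i hi).inv
  refine ⟨C, hCΦ, hC, fun i hi => (hle i hi).mono fun ω hω => ?_⟩
  rw [← ENNReal.inv_le_inv]
  simpa only [ENNReal.inv_iInf] using hω

end EssentialSupremum

section StoppingTime

variable {Ω : Type*} {mΩ : MeasurableSpace Ω} {T : Set ℝ≥0∞} {F : Filtration T mΩ}

theorem isStoppingTime_coe_iff {τ : Ω → T} :
    IsStoppingTime F (fun ω => (τ ω : WithTop T)) ↔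
      ∀ t : T, MeasurableSet[F t] {ω | (τ ω : ℝ≥0∞) ≤ t} := by
  simp only [IsStoppingTime, WithTop.coe_le_coe, Subtype.coe_le_coe]

theorem measurableSet_coe_lt {τ : Ω → T} (hτ : IsStoppingTime F (fun ω => (τ ω : WithTop T)))
    {m : MeasurableSpace Ω} {c : ℝ≥0∞} (hm : ∀ d : T, (d : ℝ≥0∞) < c → F d ≤ m) :
    MeasurableSet[m] {ω | (τ ω : ℝ≥0∞) < c} := by
  obtain ⟨D, hDA, hD, hcofinal⟩ := exists_countable_isCofinalFor (T ∩ Iio c)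
  have hunion : {ω | (τ ω : ℝ≥0∞) < c} = ⋃ d ∈ D, {ω | (τ ω : ℝ≥0∞) ≤ d} := by
    ext ω
    simp only [mem_ofPred_eq, mem_iUnion, exists_prop]
    exact ⟨fun h => hcofinal ⟨(τ ω).2, h⟩, fun ⟨d, hd, hle⟩ => hle.trans_lt (hDA hd).2⟩
  rw [hunion]
  exact MeasurableSet.biUnion hD fun d hd =>
    hm ⟨d, (hDA hd).1⟩ (hDA hd).2 _ (isStoppingTime_coe_iff.1 hτ ⟨d, (hDA hd).1⟩)

theorem measurable_coe_of_isStoppingTime {τ : Ω → T}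
    (hτ : IsStoppingTime F (fun ω => (τ ω : WithTop T))) : Measurable fun ω => (τ ω : ℝ≥0∞) :=
  measurable_of_Iio fun _ => measurableSet_coe_lt hτ fun d _ => F.le d

theorem exists_isStoppingTime_coe_eq_biSup (hT : IsClosed T) {S : Set (Ω → T)}
    (hSc : S.Countable) (hSne : S.Nonempty)
    (hS : ∀ τ ∈ S, IsStoppingTime F (fun ω => (τ ω : WithTop T))) :
    ∃ σ : Ω → T, IsStoppingTime F (fun ω => (σ ω : WithTop T)) ∧
      ∀ ω, (σ ω : ℝ≥0∞) = ⨆ τ ∈ S, (τ ω : ℝ≥0∞) := by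
  refine ⟨fun ω => ⟨_, hT.biSup_mem hSne fun τ _ => (τ ω).2⟩,
    isStoppingTime_coe_iff.2 fun t => ?_, fun ω => rfl⟩
  simp only [iSup₂_le_iff, ofPred_forall]
  exact MeasurableSet.biInter hSc fun τ hτ => isStoppingTime_coe_iff.1 (hS τ hτ) t

theorem exists_isStoppingTime_coe_eq_biInf (hT : IsClosed T)
    (hrc : ∀ t : T, (∃ s, t < s) → F t = ⨅ s : {s : T // t < s}, F s.1) {S : Set (Ω → T)}
    (hSc : S.Countable) (hSne : S.Nonempty)
    (hS : ∀ τ ∈ S, IsStoppingTime F (fun ω => (τ ω : WithTop T))) :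
    ∃ σ : Ω → T, IsStoppingTime F (fun ω => (σ ω : WithTop T)) ∧
      ∀ ω, (σ ω : ℝ≥0∞) = ⨅ τ ∈ S, (τ ω : ℝ≥0∞) := by
  set σ : Ω → T := fun ω => ⟨_, hT.biInf_mem hSne fun τ _ => (τ ω).2⟩
  refine ⟨σ, isStoppingTime_coe_iff.2 fun t => ?_, fun ω => rfl⟩
  by_cases hmax : ∃ s, t < s
  swap
  · simp only [not_exists, not_lt] at hmax
    rw [eq_univ_of_forall fun ω => hmax (σ ω)]
    exact MeasurableSet.univ
  rw [hrc t hmax]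
  refine MeasurableSpace.measurableSet_iInf.2 fun ⟨s, hts⟩ => ?_
  obtain ⟨D, hDA, hD, hle_iff⟩ := exists_countable_le_iff_forall_lt s.2 hts
  have hinter : {ω | (σ ω : ℝ≥0∞) ≤ t} = ⋂ d ∈ D, ⋃ τ ∈ S, {ω | (τ ω : ℝ≥0∞) < d} := by
    ext ω
    simp only [mem_ofPred_eq, mem_iInter, mem_iUnion, exists_prop, hle_iff _ (σ ω).2]
    simp only [σ, iInf_lt_iff, exists_prop]
  rw [hinter]
  exact MeasurableSet.biInter hD fun d hd => MeasurableSet.biUnion hSc fun τ hτ =>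
    measurableSet_coe_lt (hS τ hτ) fun r hr => F.mono (hr.le.trans (hDA hd).2.2)

end StoppingTime

section EssentialBounds

variable {Ω : Type*} {mΩ : MeasurableSpace Ω} {T : Set ℝ≥0∞} [Nonempty T] {F : Filtration T mΩ}

theorem exists_isStoppingTime_essSup (P : Measure Ω) [IsFiniteMeasure P] (hT : IsClosed T)
    (Φ : Set (Ω → T)) (hΦ : ∀ τ ∈ Φ, IsStoppingTime F (fun ω => (τ ω : WithTop T))) :
    ∃ σ : Ω → T, IsStoppingTime F (fun ω => (σ ω : WithTop T)) ∧
      (∀ τ ∈ Φ, ∀ᵐ ω ∂P, τ ω ≤ σ ω) ∧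
      ∀ Y : Ω → T, (∀ τ ∈ Φ, ∀ᵐ ω ∂P, τ ω ≤ Y ω) → ∀ᵐ ω ∂P, σ ω ≤ Y ω := by
  obtain ⟨C, hCΦ, hC, hle⟩ := exists_countable_subset_ae_le_biSup (μ := P) Φ
    (fun τ ω => (τ ω : ℝ≥0∞)) fun τ hτ => measurable_coe_of_isStoppingTime (hΦ τ hτ)
  -- adjoining the constant `sInf T` makes the family nonempty without changing its supremum
  let bot : T := ⟨sInf T, hT.sInf_mem (nonempty_coe_sort.1 ‹_›)⟩
  have hS : ∀ τ ∈ insert (fun _ => bot) C, IsStoppingTime F (fun ω => (τ ω : WithTop T)) := by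
    rintro τ (rfl | hτ)
    exacts [isStoppingTime_const F bot, hΦ τ (hCΦ hτ)]
  obtain ⟨σ, hσ, hσ_eq⟩ :=
    exists_isStoppingTime_coe_eq_biSup hT (hC.insert _) (insert_nonempty _ _) hS
  refine ⟨σ, hσ, fun τ hτ => (hle τ hτ).mono fun ω hω => ?_, fun Y hY => ?_⟩
  · exact hω.trans ((biSup_mono (subset_insert _ C)).trans (hσ_eq ω).ge)
  · filter_upwards [(ae_ball_iff hC).2 fun τ hτ => hY τ (hCΦ hτ)] with ω hω
    show (σ ω : ℝ≥0∞) ≤ Y ω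
    rw [hσ_eq, iSup₂_le_iff]
    rintro τ (rfl | hτ)
    exacts [sInf_le (Y ω).2, hω τ hτ]

theorem exists_isStoppingTime_essInf (P : Measure Ω) [IsFiniteMeasure P] (hT : IsClosed T)
    (hrc : ∀ t : T, (∃ s, t < s) → F t = ⨅ s : {s : T // t < s}, F s.1)
    (Φ : Set (Ω → T)) (hΦ : ∀ τ ∈ Φ, IsStoppingTime F (fun ω => (τ ω : WithTop T))) :
    ∃ σ : Ω → T, IsStoppingTime F (fun ω => (σ ω : WithTop T)) ∧
      (∀ τ ∈ Φ, ∀ᵐ ω ∂P, σ ω ≤ τ ω) ∧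
      ∀ Y : Ω → T, (∀ τ ∈ Φ, ∀ᵐ ω ∂P, Y ω ≤ τ ω) → ∀ᵐ ω ∂P, Y ω ≤ σ ω := by
  obtain ⟨C, hCΦ, hC, hle⟩ := exists_countable_subset_ae_biInf_le (μ := P) Φ
    (fun τ ω => (τ ω : ℝ≥0∞)) fun τ hτ => measurable_coe_of_isStoppingTime (hΦ τ hτ)
  let top : T := ⟨sSup T, hT.sSup_mem (nonempty_coe_sort.1 ‹_›)⟩
  have hS : ∀ τ ∈ insert (fun _ => top) C, IsStoppingTime F (fun ω => (τ ω : WithTop T)) := by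
    rintro τ (rfl | hτ)
    exacts [isStoppingTime_const F top, hΦ τ (hCΦ hτ)]
  obtain ⟨σ, hσ, hσ_eq⟩ :=
    exists_isStoppingTime_coe_eq_biInf hT hrc (hC.insert _) (insert_nonempty _ _) hS
  refine ⟨σ, hσ, fun τ hτ => (hle τ hτ).mono fun ω hω => ?_, fun Y hY => ?_⟩
  · exact ((hσ_eq ω).le.trans (biInf_mono (subset_insert _ C))).trans hω
  · filter_upwards [(ae_ball_iff hC).2 fun τ hτ => hY τ (hCΦ hτ)] with ω hω
    show (Y ω : ℝ≥0∞) ≤ σ ω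
    rw [hσ_eq, le_iInf₂_iff]
    rintro τ (rfl | hτ)
    exacts [le_sSup (Y ω).2, hω τ hτ]

end EssentialBounds

theorem stmt_14_general (𝕋s : Set ENNReal) (hcomp : IsCompact 𝕋s) [Nonempty 𝕋s]
    {Ω : Type*} {mΩ : MeasurableSpace Ω} (P : Measure Ω) [IsProbabilityMeasure P]
    (F : Filtration 𝕋s mΩ)
    (hrc : ∀ t : 𝕋s, (∃ s, t < s) → F t = ⨅ s : {s : 𝕋s // t < s}, F s.1)
    (Φ : Set (Ω → 𝕋s)) (hΦ : ∀ τ ∈ Φ, IsStoppingTime F (fun ω => (τ ω : WithTop 𝕋s))) :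
    (∃ σmax : Ω → 𝕋s, IsStoppingTime F (fun ω => (σmax ω : WithTop 𝕋s)) ∧
      (∀ τ ∈ Φ, ∀ᵐ ω ∂P, τ ω ≤ σmax ω) ∧
      (∀ Y : Ω → 𝕋s, Measurable Y → (∀ τ ∈ Φ, ∀ᵐ ω ∂P, τ ω ≤ Y ω) →
        ∀ᵐ ω ∂P, σmax ω ≤ Y ω)) ∧
    (∃ σmin : Ω → 𝕋s, IsStoppingTime F (fun ω => (σmin ω : WithTop 𝕋s)) ∧
      (∀ τ ∈ Φ, ∀ᵐ ω ∂P, σmin ω ≤ τ ω) ∧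
      (∀ Y : Ω → 𝕋s, Measurable Y → (∀ τ ∈ Φ, ∀ᵐ ω ∂P, Y ω ≤ τ ω) →
        ∀ᵐ ω ∂P, Y ω ≤ σmin ω)) := by
  obtain ⟨σmax, hσmax, hub, hleast⟩ := exists_isStoppingTime_essSup P hcomp.isClosed Φ hΦ
  obtain ⟨σmin, hσmin, hlb, hgreatest⟩ :=
    exists_isStoppingTime_essInf P hcomp.isClosed hrc Φ hΦ
  exact ⟨⟨σmax, hσmax, hub, fun Y _ => hleast Y⟩, ⟨σmin, hσmin, hlb, fun Y _ => hgreatest Y⟩⟩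

/-- **Theorem (the lattice of stopping times is complete).**
Let `𝕋 ⊆ [0,∞]` be a compact time set (discrete or an interval `[0,T]`), and let
`F` be a right-continuous filtration on a probability space `(Ω, P)`. Then for every family
`Φ` of `𝕋`-valued `F`-stopping times, the essential supremum and the essential infimum of `Φ`
are (a.s. equal to) `F`-stopping times; i.e. there are stopping times which are a.s. upper
(resp. lower) bounds of `Φ` and are a.s. below (resp. above) every measurable a.s. upper
(resp. lower) bound, so the set of a.s.-equivalence classes of stopping times with the a.s.
order is a complete lattice. -/
theorem stmt_14 (𝕋s : Set ENNReal) (hcomp : IsCompact 𝕋s) [Nonempty 𝕋s]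
    (hform : DiscreteTopology 𝕋s ∨ ∃ a, 𝕋s = Set.Icc 0 a)
    {Ω : Type*} {mΩ : MeasurableSpace Ω} (P : Measure Ω) [IsProbabilityMeasure P]
    (F : Filtration 𝕋s mΩ)
    (hrc : ∀ t : 𝕋s, (∃ s, t < s) → F t = ⨅ s : {s : 𝕋s // t < s}, F s.1)
    (Φ : Set (Ω → 𝕋s)) (hΦ : ∀ τ ∈ Φ, IsStoppingTime F (fun ω => (τ ω : WithTop 𝕋s))) :
    (∃ σmax : Ω → 𝕋s, IsStoppingTime F (fun ω => (σmax ω : WithTop 𝕋s)) ∧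
      (∀ τ ∈ Φ, ∀ᵐ ω ∂P, τ ω ≤ σmax ω) ∧
      (∀ Y : Ω → 𝕋s, Measurable Y → (∀ τ ∈ Φ, ∀ᵐ ω ∂P, τ ω ≤ Y ω) →
        ∀ᵐ ω ∂P, σmax ω ≤ Y ω)) ∧
    (∃ σmin : Ω → 𝕋s, IsStoppingTime F (fun ω => (σmin ω : WithTop 𝕋s)) ∧
      (∀ τ ∈ Φ, ∀ᵐ ω ∂P, σmin ω ≤ τ ω) ∧
      (∀ Y : Ω → 𝕋s, Measurable Y → (∀ τ ∈ Φ, ∀ᵐ ω ∂P, Y ω ≤ τ ω) →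
        ∀ᵐ ω ∂P, Y ω ≤ σmin ω)) :=
  stmt_14_general 𝕋s hcomp P F hrc Φ hΦ
end

section
/- Let E and E' be Polish spaces, and let P_n, P be Borel probability measures on E × E' with P_n → P weakly, such that every P_n has the same E-marginal, i.e. P_n(· × E') does not depend on n; call this common marginal μ. Then for every bounded measurable function φ : E × E' → ℝ such that φ(x,·) is continuous on E' for μ-almost every x ∈ E, one has ∫ φ dP_n → ∫ φ dP. -/
/-!
By tightness of a convergent sequence, all the `Pₙ` and `P` give mass at most `δ` to the
complement of a compact `K`; let `K₂` be its projection to `E'`. The map `x ↦ φ (x, ·)|K₂`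
into the Polish space `C(K₂, ℝ)` is measurable, so by Lusin's theorem it is continuous on a
closed set `A` with `μ Aᶜ < δ`. Then `φ` is jointly continuous on `A ×ˢ K₂`, and a bounded
Tietze extension `ψ` of it satisfies `|∫ φ dQ - ∫ ψ dQ| = O(δ)` for every `Q` with
`E`-marginal `μ` and little mass off `K`: the two functions differ only on
`(A ×ˢ K₂)ᶜ ⊆ (Aᶜ ×ˢ univ) ∪ Kᶜ`. This applies to all the `Pₙ` and to `P`, whose marginal is
also `μ`, and weak convergence handles `ψ`.
-/

open MeasureTheory Filter Topology Set
open scoped ENNReal BoundedContinuousFunction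

theorem ContinuousMap.measurable_of_forall_measurable_apply {α K : Type*} [MeasurableSpace α]
    [TopologicalSpace K] [CompactSpace K] [TopologicalSpace.MetrizableSpace K]
    [MeasurableSpace C(K, ℝ)] [BorelSpace C(K, ℝ)] {f : α → C(K, ℝ)}
    (hf : ∀ y, Measurable fun x => f x y) : Measurable f := by
  obtain ⟨D, hDc, hD⟩ := TopologicalSpace.exists_countable_dense K
  have : Countable D := hDc.to_subtype
  -- restriction to a countable dense set is a continuous injection of a Polish space,
  -- hence a measurable embedding by Lusin–Souslin
  have hemb : MeasurableEmbedding fun (g : C(K, ℝ)) (y : D) => g y :=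
    (continuous_pi fun y => continuous_eval_const _).measurableEmbedding fun g g' h =>
      ContinuousMap.ext fun y => congrFun (hD.denseRange_val.equalizer g.continuous
        g'.continuous (funext fun y => congrFun h y)) y
  exact hemb.measurable_comp_iff.1 (measurable_pi_lambda _ fun y => hf y)

theorem Measurable.exists_isClosed_measure_compl_lt_continuousOn {α β : Type*}
    [TopologicalSpace α] [TopologicalSpace.PseudoMetrizableSpace α] [MeasurableSpace α]
    [BorelSpace α] [TopologicalSpace β] [SecondCountableTopology β]
    [MeasurableSpace β] [OpensMeasurableSpace β] {μ : Measure α} [IsFiniteMeasure μ]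
    {f : α → β} (hf : Measurable f) {ε : ℝ≥0∞} (hε : ε ≠ 0) :
    ∃ A, IsClosed A ∧ μ Aᶜ < ε ∧ ContinuousOn f A := by
  let ι := TopologicalSpace.countableBasis β
  have : Countable ι := (TopologicalSpace.countable_countableBasis β).to_subtype
  obtain ⟨ε', hε'0, hε'⟩ :=
    ENNReal.exists_pos_sum_of_countable' (ENNReal.half_pos hε).ne' ι
  have hs (U : ι) : MeasurableSet (f ⁻¹' U) :=
    hf (TopologicalSpace.isOpen_of_mem_countableBasis U.2).measurableSet
  choose F hFs hF hμF using fun U : ι =>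
    (hs U).exists_isClosed_sdiff_lt (measure_ne_top μ _) (hε'0 U).ne'
  choose G hGs hG hμG using fun U : ι =>
    (hs U).compl.exists_isClosed_sdiff_lt (measure_ne_top μ _) (hε'0 U).ne'
  -- on `A`, the preimage of a basic open set `U` is cut out by the closed set `G U`
  refine ⟨⋂ U : ι, F U ∪ G U, isClosed_iInter fun U => (hF U).union (hG U), ?_, ?_⟩
  · calc μ (⋂ U : ι, F U ∪ G U)ᶜ
          ≤ ∑' U : ι, (μ (f ⁻¹' U \ F U) + μ ((f ⁻¹' U)ᶜ \ G U)) := by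
          refine (measure_mono ?_).trans (measure_iUnion_le _) |>.trans
            (ENNReal.tsum_le_tsum fun U => measure_union_le _ _)
          rw [compl_iInter]
          refine iUnion_mono fun U x hx => ?_
          by_cases hxU : x ∈ f ⁻¹' U <;> simp_all
      _ ≤ ∑' U : ι, ε' U * 2 := ENNReal.tsum_le_tsum fun U => by
          rw [mul_two]; exact add_le_add (hμF U).le (hμG U).le
      _ < ε := by
          rw [ENNReal.tsum_mul_right]
          exact (ENNReal.lt_div_iff_mul_lt (by simp) (by simp)).1 hε'
  · rw [continuousOn_iff_continuous_domRestrict,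
      (TopologicalSpace.isBasis_countableBasis β).continuous_iff]
    intro U hU
    have : (⋂ U : ι, F U ∪ G U).domRestrict f ⁻¹' U =
        Subtype.val ⁻¹' (G ⟨U, hU⟩)ᶜ := by
      ext ⟨x, hx⟩
      rcases mem_iInter.1 hx ⟨U, hU⟩ with hxF | hxG
      · exact iff_of_true (hFs _ hxF) fun hxG => hGs _ hxG (hFs _ hxF)
      · exact iff_of_false (hGs _ hxG) (not_not.2 hxG)
    rw [this]
    exact (hG _).isOpen_compl.preimage continuous_subtype_val

theorem ContinuousOn.continuousOn_prod_of_apply_eq {X Y Z : Type*} [TopologicalSpace X]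
    [TopologicalSpace Y] [TopologicalSpace Z] {A : Set X} {K : Set Y} [LocallyCompactSpace K]
    {F : X → C(K, Z)} (hF : ContinuousOn F A) {g : X × Y → Z}
    (hFg : ∀ x (y : K), F x y = g (x, y)) : ContinuousOn g (A ×ˢ K) := by
  rw [continuousOn_iff_continuous_domRestrict] at hF ⊢
  have hpair :
      Continuous fun p : ↥(A ×ˢ K) => ((⟨p.1.1, p.2.1⟩ : A), (⟨p.1.2, p.2.2⟩ : K)) :=
    ((continuous_fst.comp continuous_subtype_val).subtype_mk _).prodMk
      ((continuous_snd.comp continuous_subtype_val).subtype_mk _)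
  convert continuous_eval.comp ((hF.prodMap continuous_id).comp hpair) using 1
  ext p
  exact (hFg p.1.1 ⟨p.1.2, p.2.2⟩).symm

theorem IsClosed.exists_boundedContinuous_eqOn_abs_le {X : Type*} [TopologicalSpace X]
    [NormalSpace X] {S : Set X} (hS : IsClosed S) {g : X → ℝ} (hg : ContinuousOn g S) {C : ℝ}
    (hC : 0 ≤ C) (hgC : ∀ x ∈ S, |g x| ≤ C) : ∃ ψ : X →ᵇ ℝ, EqOn ψ g S ∧ ∀ x, |ψ x| ≤ C := by
  let f : S →ᵇ ℝ := .ofNormedAddCommGroup (S.domRestrict g)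
    (continuousOn_iff_continuous_domRestrict.1 hg) C fun x => hgC x x.2
  obtain ⟨ψ, hψf, hψS⟩ :=
    BoundedContinuousFunction.exists_norm_eq_domRestrict_eq_of_closed f hS
  refine ⟨ψ, fun x hx => congrArg (· ⟨x, hx⟩) hψS, fun x => ?_⟩
  rw [← Real.norm_eq_abs]
  exact (ψ.norm_coe_le_norm x).trans
    (hψf ▸ BoundedContinuousFunction.norm_ofNormedAddCommGroup_le _ hC _)

theorem abs_integral_sub_le_of_eqOn_compl {α : Type*} [MeasurableSpace α] {Q : Measure α}
    [IsFiniteMeasure Q] {f g : α → ℝ} (hf : Integrable f Q) (hg : Integrable g Q) {s : Set α}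
    (hfg : EqOn f g sᶜ) {C : ℝ} (hC : ∀ x ∈ s, |f x - g x| ≤ C) :
    |∫ x, f x ∂Q - ∫ x, g x ∂Q| ≤ C * Q.real s := by
  rw [← integral_sub hf hg, ← setIntegral_eq_integral_of_forall_compl_eq_zero
    fun x hx => sub_eq_zero.2 (hfg hx)]
  exact norm_setIntegral_le_of_norm_le_const (measure_lt_top _ _) fun x hx =>
    (Real.norm_eq_abs _).trans_le (hC x hx)

theorem tendsto_of_forall_approx {α : Type*} {l : Filter α} {u : α → ℝ} {a : ℝ}
    (h : ∀ ε > 0, ∃ v : α → ℝ, ∃ b, Tendsto v l (𝓝 b) ∧ (∀ n, |u n - v n| ≤ ε) ∧ |a - b| ≤ ε) :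
    Tendsto u l (𝓝 a) := by
  rw [Metric.tendsto_nhds]
  intro ε hε
  obtain ⟨v, b, hv, huv, hab⟩ := h (ε / 4) (by positivity)
  filter_upwards [Metric.tendsto_nhds.1 hv (ε / 4) (by positivity)] with n hn
  rw [Real.dist_eq] at hn ⊢
  linarith [abs_sub_le (u n) (v n) a, abs_sub_le (v n) b a, abs_sub_comm a b, huv n]

namespace MeasureTheory.ProbabilityMeasure

variable {X : Type*} [TopologicalSpace X] [MeasurableSpace X] [BorelSpace X]
  {μs : ℕ → ProbabilityMeasure X} {μ : ProbabilityMeasure X}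

theorem exists_isCompact_measure_compl_le_of_tendsto [PolishSpace X]
    (h : Tendsto μs atTop (𝓝 μ)) {ε : ℝ≥0∞} (hε : 0 < ε) :
    ∃ K, IsCompact K ∧ (∀ n, (μs n : Measure X) Kᶜ ≤ ε) ∧ (μ : Measure X) Kᶜ ≤ ε := by
  let := TopologicalSpace.upgradeIsCompletelyMetrizable X
  have hS : IsCompact (closure (insert μ (range μs))) := by
    rw [h.isCompact_insert_range.isClosed.closure_eq]
    exact h.isCompact_insert_range
  obtain ⟨K, hK, hKε⟩ :=
    (isTightMeasureSet_iff_exists_isCompact_measure_compl_le.1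
      (isTightMeasureSet_of_isCompact_closure hS)) ε hε
  exact ⟨K, hK, fun n => hKε _ ⟨μs n, by simp, rfl⟩, hKε _ ⟨μ, by simp, rfl⟩⟩

theorem map_eq_of_tendsto {Y : Type*} [TopologicalSpace Y]
    [TopologicalSpace.PseudoMetrizableSpace Y] [MeasurableSpace Y] [BorelSpace Y] {f : X → Y}
    (hf : Continuous f) (h : Tendsto μs atTop (𝓝 μ)) {ν : Measure Y}
    (hν : ∀ n, (μs n : Measure X).map f = ν) : (μ : Measure X).map f = ν := by
  have hνprob : IsProbabilityMeasure ν :=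
    hν 0 ▸ Measure.isProbabilityMeasure_map hf.aemeasurable
  let ν' : ProbabilityMeasure Y := ⟨ν, hνprob⟩
  have hlim : Tendsto (fun _ => ν') atTop (𝓝 (μ.map hf.aemeasurable)) :=
    (tendsto_map_of_tendsto_of_continuous μs μ h hf).congr fun n => Subtype.ext (hν n)
  simpa [ν'] using congrArg toMeasure (tendsto_nhds_unique hlim tendsto_const_nhds)

end MeasureTheory.ProbabilityMeasure

theorem exists_boundedContinuous_abs_integral_sub_le {E E' : Type*}
    [TopologicalSpace E] [TopologicalSpace.MetrizableSpace E] [MeasurableSpace E] [BorelSpace E]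
    [TopologicalSpace E'] [TopologicalSpace.MetrizableSpace E'] [SecondCountableTopology E']
    [MeasurableSpace E'] [BorelSpace E'] (μ : Measure E) [IsFiniteMeasure μ]
    {φ : E × E' → ℝ} (hφmeas : Measurable φ) {C : ℝ} (hC : 0 ≤ C) (hφC : ∀ z, |φ z| ≤ C)
    (hφcont : ∀ x, Continuous fun y => φ (x, y)) {K : Set (E × E')} (hK : IsCompact K)
    {δ : ℝ} (hδ : 0 < δ) :
    ∃ ψ : E × E' →ᵇ ℝ, ∀ (Q : Measure (E × E')) [IsFiniteMeasure Q], Q.map Prod.fst = μ →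
      |∫ z, φ z ∂Q - ∫ z, ψ z ∂Q| ≤ 2 * C * (δ + Q.real Kᶜ) := by
  set K₂ := Prod.snd '' K
  have hK₂ : IsCompact K₂ := hK.image continuous_snd
  have := isCompact_iff_compactSpace.1 hK₂
  let F : E → C(K₂, ℝ) := fun x => (⟨fun y => φ (x, y), hφcont x⟩ : C(E', ℝ)).restrict K₂
  borelize C(K₂, ℝ)
  have hF : Measurable F := ContinuousMap.measurable_of_forall_measurable_apply fun y =>
    hφmeas.comp measurable_prodMk_right
  obtain ⟨A, hA, hμA, hFA⟩ :=
    hF.exists_isClosed_measure_compl_lt_continuousOn (μ := μ) (ENNReal.ofReal_pos.2 hδ).ne'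
  obtain ⟨ψ, hψφ, hψC⟩ := (hA.prod hK₂.isClosed).exists_boundedContinuous_eqOn_abs_le
    (hFA.continuousOn_prod_of_apply_eq fun x y => rfl) hC fun z _ => hφC z
  refine ⟨ψ, fun Q _ hQ => ?_⟩
  have hφint : Integrable φ Q :=
    .of_bound hφmeas.aestronglyMeasurable C (ae_of_all _ fun z => hφC z)
  have hbad : Q.real (A ×ˢ K₂)ᶜ ≤ δ + Q.real Kᶜ := by
    have hsub : (A ×ˢ K₂)ᶜ ⊆ Prod.fst ⁻¹' Aᶜ ∪ Kᶜ := fun z hz => by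
      by_contra h
      simp only [mem_union, mem_preimage, mem_compl_iff, not_or, not_not] at h
      exact hz ⟨h.1, z, h.2, rfl⟩
    have hA' : Q.real (Prod.fst ⁻¹' Aᶜ) ≤ δ := by
      rw [← map_measureReal_apply measurable_fst hA.measurableSet.compl, hQ]
      exact ENNReal.toReal_le_of_le_ofReal hδ.le hμA.le
    linarith [measureReal_mono (μ := Q) hsub,
      measureReal_union_le (μ := Q) (Prod.fst ⁻¹' Aᶜ) Kᶜ]
  calc |∫ z, φ z ∂Q - ∫ z, ψ z ∂Q|
      ≤ 2 * C * Q.real (A ×ˢ K₂)ᶜ :=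
        abs_integral_sub_le_of_eqOn_compl hφint (ψ.integrable Q)
          (fun z hz => (hψφ (not_not.1 hz)).symm) fun z _ => by
            linarith [abs_sub (φ z) (ψ z), hφC z, hψC z]
    _ ≤ 2 * C * (δ + Q.real Kᶜ) := by gcongr

theorem tendsto_integral_of_map_fst_eq {E E' : Type*}
    [TopologicalSpace E] [PolishSpace E] [MeasurableSpace E] [BorelSpace E]
    [TopologicalSpace E'] [PolishSpace E'] [MeasurableSpace E'] [BorelSpace E']
    {Pn : ℕ → ProbabilityMeasure (E × E')} {P : ProbabilityMeasure (E × E')} {μ : Measure E}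
    (hmarg : ∀ n, (Pn n : Measure (E × E')).map Prod.fst = μ)
    (hconv : Tendsto Pn atTop (𝓝 P)) {φ : E × E' → ℝ} (hφmeas : Measurable φ) {C : ℝ}
    (hφC : ∀ z, |φ z| ≤ C) (hφcont : ∀ x, Continuous fun y => φ (x, y)) :
    Tendsto (fun n => ∫ z, φ z ∂(Pn n : Measure (E × E'))) atTop
      (𝓝 (∫ z, φ z ∂(P : Measure (E × E')))) := by
  have : IsFiniteMeasure μ := hmarg 0 ▸ inferInstance
  have hPmarg := ProbabilityMeasure.map_eq_of_tendsto continuous_fst hconv hmarg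
  have := nonempty_of_isProbabilityMeasure (P : Measure (E × E'))
  have hC : 0 ≤ C := (abs_nonneg _).trans (hφC (Classical.arbitrary _))
  refine tendsto_of_forall_approx fun ε hε => ?_
  set δ := ε / (4 * C + 1)
  have hδ : 0 < δ := by positivity
  obtain ⟨K, hK, hPnK, hPK⟩ := ProbabilityMeasure.exists_isCompact_measure_compl_le_of_tendsto
    hconv (ENNReal.ofReal_pos.2 hδ)
  obtain ⟨ψ, hψ⟩ := exists_boundedContinuous_abs_integral_sub_le μ hφmeas hC hφC hφcont hK hδ
  have herr (Q : ProbabilityMeasure (E × E')) (hQ : (Q : Measure (E × E')).map Prod.fst = μ)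
      (hQK : (Q : Measure (E × E')) Kᶜ ≤ ENNReal.ofReal δ) :
      |∫ z, φ z ∂(Q : Measure (E × E')) - ∫ z, ψ z ∂(Q : Measure (E × E'))| ≤ ε := by
    have hQK' := ENNReal.toReal_le_of_le_ofReal hδ.le hQK
    calc _ ≤ 2 * C * (δ + (Q : Measure (E × E')).real Kᶜ) := hψ _ hQ
      _ ≤ 4 * C * δ := by rw [measureReal_def]; nlinarith
      _ ≤ ε := by
        rw [mul_div_assoc', div_le_iff₀ (by positivity)]
        linarith
  exact ⟨_, _, ProbabilityMeasure.tendsto_iff_forall_integral_tendsto.1 hconv ψ,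
    fun n => herr _ (hmarg n) (hPnK n), herr _ hPmarg hPK⟩

/-- **Lemma (Jacod–Mémin).** If `Pₙ → P` weakly on a product of Polish spaces `E × E'`, all the
`Pₙ` having the same `E`-marginal `μ`, then `∫ φ dPₙ → ∫ φ dP` for every bounded measurable
`φ : E × E' → ℝ` such that `φ (x, ·)` is continuous for `μ`-a.e. `x`. -/
theorem stmt_15
    {E E' : Type*}
    [TopologicalSpace E] [PolishSpace E] [MeasurableSpace E] [BorelSpace E]
    [TopologicalSpace E'] [PolishSpace E'] [MeasurableSpace E'] [BorelSpace E']
    (Pn : ℕ → ProbabilityMeasure (E × E')) (P : ProbabilityMeasure (E × E'))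
    (μ : Measure E)
    (hmarg : ∀ n, (Pn n : Measure (E × E')).map Prod.fst = μ)
    (hconv : Tendsto Pn atTop (𝓝 P))
    (φ : E × E' → ℝ) (hφmeas : Measurable φ) (hφbdd : ∃ C, ∀ z, |φ z| ≤ C)
    (hφcont : ∀ᵐ x ∂μ, Continuous fun y => φ (x, y)) :
    Tendsto (fun n => ∫ z, φ z ∂(Pn n : Measure (E × E'))) atTop
      (𝓝 (∫ z, φ z ∂(P : Measure (E × E')))) := by
  obtain ⟨C, hφC⟩ := hφbdd
  obtain ⟨s, hsμ, hs, hφs⟩ := hφcont.exists_measurable_mem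
  -- changing `φ` off `s ×ˢ univ` changes no integral: every measure involved has marginal `μ`
  let φ' := (Prod.fst ⁻¹' s).indicator φ
  have hφφ' (Q : Measure (E × E')) (hQ : Q.map Prod.fst = μ) : φ' =ᵐ[Q] φ := by
    filter_upwards [ae_of_ae_map measurable_fst.aemeasurable (hQ ▸ hsμ)] with z hz
    exact indicator_of_mem (show z ∈ Prod.fst ⁻¹' s from hz) φ
  have hφ'cont (x : E) : Continuous fun y => φ' (x, y) := by
    by_cases hx : x ∈ s
    · simpa [φ', indicator, hx] using hφs x hx
    · simpa [φ', indicator, hx] using continuous_const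
  have hφ'C (z : E × E') : |φ' z| ≤ C := by
    by_cases hz : z.1 ∈ s
    · simpa [φ', indicator, hz] using hφC z
    · simpa [φ', indicator, hz] using (abs_nonneg _).trans (hφC z)
  have hlim := tendsto_integral_of_map_fst_eq hmarg hconv
    (hφmeas.indicator (measurable_fst hs)) hφ'C hφ'cont
  have hPmarg := ProbabilityMeasure.map_eq_of_tendsto continuous_fst hconv hmarg
  rw [integral_congr_ae (hφφ' _ hPmarg)] at hlim
  exact hlim.congr fun n => integral_congr_ae (hφφ' _ (hmarg n))
end
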